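/- Let n, m_min, m_init, m_step be integers with 1 ≤ m_min ≤ m_init ≤ n and m_step ≥ 1. Let m : ℕ → ℤ and c : ℕ → ℕ be sequences with m 0 = m_init and c 0 = 0 such that for every j ∈ ℕ one of the following holds: (no reset) c (j+1) = c j, m_min ≤ m (j+1), and m (j+1) ≤ m j − 1; or (reset) c (j+1) = c j + 1 and m (j+1) = m_init + (c (j+1)) · m_step. Then there exists N ∈ ℕ with N ≤ n·(n+1)/2 such that m N ≥ n. -/
import Mathlib


/-- Combinatorial core of Proposition 1 (PD-GMRES restart parameter sequence):
the restart parameter reaches the matrix dimension `n` within `n(n+1)/2` restarts. -/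
theorem pdgmres_restart_reaches_dimension
    (n mmin minit mstep : ℤ)
    (h1 : 1 ≤ mmin) (h2 : mmin ≤ minit) (h3 : minit ≤ n) (h4 : 1 ≤ mstep)
    (m : ℕ → ℤ) (c : ℕ → ℕ)
    (hm0 : m 0 = minit) (hc0 : c 0 = 0)
    (hstep : ∀ j : ℕ,
      (c (j + 1) = c j ∧ mmin ≤ m (j + 1) ∧ m (j + 1) ≤ m j - 1) ∨
      (c (j + 1) = c j + 1 ∧ m (j + 1) = minit + (c (j + 1) : ℤ) * mstep)) :
    ∃ N : ℕ, (N : ℤ) ≤ n * (n + 1) / 2 ∧ n ≤ m N := by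
  set v : ℕ → ℤ := fun j => minit + (c j : ℤ) * mstep with hv_def
  -- invariant: mmin ≤ m j
  have hA : ∀ j, mmin ≤ m j := by
    intro j
    induction j with
    | zero => rw [hm0]; exact h2
    | succ j ih =>
      rcases hstep j with ⟨_, hlb, _⟩ | ⟨_, heq⟩
      · exact hlb
      · rw [heq]
        have : (0:ℤ) ≤ (c (j+1) : ℤ) * mstep := by positivity
        linarith
  -- v j ≥ 1
  have hv1 : ∀ j, 1 ≤ v j := by
    intro j
    have : (0:ℤ) ≤ (c j : ℤ) * mstep := by positivity
    simp only [hv_def]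
    linarith
  set Ψ : ℕ → ℤ := fun j => 2 * (m j - mmin) + (n * (n+1) - v j * (v j + 1)) with hΨ_def
  -- key descent lemma
  have hkey : ∀ j, (∀ i, i ≤ j → m i < n) → v j ≤ n - 1 ∧ Ψ j + 2 * j ≤ Ψ 0 := by
    intro j
    induction j with
    | zero =>
      intro hP
      have h0 : m 0 < n := hP 0 le_rfl
      constructor
      · simp only [hv_def, hc0]
        push_cast
        rw [hm0] at h0
        linarith
      · simp
    | succ j ih =>
      intro hP
      have hPj : ∀ i, i ≤ j → m i < n := fun i hi => hP i (Nat.le_succ_of_le hi)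
      obtain ⟨ihv, ihΨ⟩ := ih hPj
      have hnext : m (j+1) < n := hP (j+1) le_rfl
      have hmj := hA j
      rcases hstep j with ⟨hc, hlb, hub⟩ | ⟨hc, heq⟩
      · have hveq : v (j+1) = v j := by simp only [hv_def, hc]
        constructor
        · rw [hveq]; exact ihv
        · have : Ψ (j+1) ≤ Ψ j - 2 := by
            simp only [hΨ_def, hveq]
            linarith
          push_cast
          linarith
      · have hveq : v (j+1) = v j + mstep := by
          simp only [hv_def, hc]
          push_cast
          ring
        have hmeq : m (j+1) = v (j+1) := heq
        constructor
        · rw [← hmeq]; linarith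
        · have hwj := hv1 j
          have : Ψ (j+1) ≤ Ψ j - 2 := by
            simp only [hΨ_def, hmeq, hveq]
            nlinarith [hwj, h4, hmj, h1]
          push_cast
          linarith
  -- nonnegativity of Ψ under the hypothesis
  have hΨnn : ∀ j, v j ≤ n - 1 → 0 ≤ Ψ j := by
    intro j hvj
    have hmj := hA j
    have hwj := hv1 j
    simp only [hΨ_def]
    nlinarith
  -- existence of a hitting time
  have hex : ∃ j, n ≤ m j := by
    by_contra hcon
    push_neg at hcon
    set J : ℕ := (Ψ 0).toNat + 1 with hJ
    obtain ⟨hvJ, hΨJ⟩ := hkey J (fun i _ => hcon i)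
    have h0 := hΨnn J hvJ
    have h1' : Ψ 0 ≤ ((Ψ 0).toNat : ℤ) := Int.self_le_toNat _
    have : (J : ℤ) = ((Ψ 0).toNat : ℤ) + 1 := by push_cast [hJ]; ring
    linarith
  refine ⟨Nat.find hex, ?_, Nat.find_spec hex⟩
  have hnn : (0:ℤ) ≤ n * (n+1) := by nlinarith
  rw [Int.le_ediv_iff_mul_le (by norm_num : (0:ℤ) < 2)]
  rcases Nat.eq_zero_or_eq_succ_pred (Nat.find hex) with h0 | hsucc
  · rw [h0]; push_cast; linarith
  · set K := (Nat.find hex) - 1 with hK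
    have hNK : Nat.find hex = K + 1 := hsucc
    have hPK : ∀ i, i ≤ K → m i < n := by
      intro i hi
      have : i < Nat.find hex := by omega
      have := Nat.find_min hex this
      linarith [not_le.mp this]
    obtain ⟨hvK, hΨK⟩ := hkey K hPK
    have h0' := hΨnn K hvK
    have hΨ0 : Ψ 0 = 2 * (minit - mmin) + (n * (n+1) - minit * (minit + 1)) := by
      simp only [hΨ_def, hv_def, hc0, hm0]
      push_cast
      ring
    have hbd : 2 * (K:ℤ) ≤ Ψ 0 := by linarith
    rw [hΨ0] at hbd
    have : 2 * minit ≤ minit * (minit + 1) := by nlinarith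
    rw [hNK]
    push_cast
    linarith
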